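/- Let a, b, c be positive real numbers and let μ : ℕ → ℝ be defined recursively by μ_1 = b and, for m ≥ 2, μ_m = a·Σ_{p=2}^{m} c^p Σ_{k_1+⋯+k_p=m, k_i≥1} μ_{k_1}⋯μ_{k_p} + b·Σ_{p=1}^{m−1} c^p Σ_{k_1+⋯+k_p=m−1, k_i≥1} μ_{k_1}⋯μ_{k_p}. Define χ_m = a·Σ_{p=1}^{m} c^p Σ_{k_1+⋯+k_p=m, k_i≥1} μ_{k_1}⋯μ_{k_p} for m ≥ 1. Then for every m ≥ 1, χ_m ≤ a·(4b(c + a c²))^m. -/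

import Mathlib

open Finset

/-- `compSum μ p m = Σ_{k_1+⋯+k_p = m, k_i ≥ 1} μ_{k_1} ⋯ μ_{k_p}`. -/
noncomputable def compSum (μ : ℕ → ℝ) (p m : ℕ) : ℝ :=
  ∑ k ∈ (Finset.Nat.antidiagonalTuple p m).filter (fun k => ∀ i, 1 ≤ k i),
    ∏ i, μ (k i)

/-- `μ` satisfies the two-term composition-sum recursion with parameters `a`, `b`, `c`. -/
def IsMuSeq (a b c : ℝ) (μ : ℕ → ℝ) : Prop :=
  μ 1 = b ∧ ∀ m, 2 ≤ m →
    μ m = a * ∑ p ∈ Finset.Icc 2 m, c ^ p * compSum μ p m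
        + b * ∑ p ∈ Finset.Icc 1 (m - 1), c ^ p * compSum μ p (m - 1)

/-!
With `d = c + a c²`, write `T_m = Σ_p c^p Σ_{k_1+⋯+k_p=m} μ_{k_1}⋯μ_{k_p}` including the empty
composition, so that `T_0 = 1`, `T_{m+1} = c Σ_{i+j=m} μ_{i+1} T_j` and `χ_m = a T_m` for `m ≥ 1`.
The recursion reads `(1 + ac) μ_{m+1} = a T_{m+1} + b T_m`; feeding this into the convolution
`Σ_{i+j=m} μ_{i+1} μ_{j+1}` and using the recursion for `T` twice collapses it to the Catalan
recursion `μ_{m+2} = d Σ_{i+j=m} μ_{i+1} μ_{j+1}`, so `μ_{n+1} = C_n b^{n+1} d^n`.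
Since `c ≤ d`, the recursion for `T` then gives `T_m ≤ C_m (bd)^m` by induction, and `C_m ≤ 4^m`.
-/

lemma compSum_zero_zero (f : ℕ → ℝ) : compSum f 0 0 = 1 := by
  simp [compSum, Finset.Nat.antidiagonalTuple_zero_zero]

lemma compSum_zero_succ (f : ℕ → ℝ) (m : ℕ) : compSum f 0 (m + 1) = 0 := by
  simp [compSum, Finset.Nat.antidiagonalTuple_zero_succ]

lemma compSum_eq_zero_of_lt (f : ℕ → ℝ) {p m : ℕ} (h : m < p) : compSum f p m = 0 := by
  refine sum_eq_zero fun k hk => absurd h (not_lt.mpr ?_)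
  rw [mem_filter, Finset.Nat.mem_antidiagonalTuple] at hk
  simpa [← hk.1] using card_nsmul_le_sum univ k 1 fun i _ => hk.2 i

lemma compSum_one (f : ℕ → ℝ) {m : ℕ} (hm : 1 ≤ m) : compSum f 1 m = f m := by
  simp [compSum, Finset.Nat.antidiagonalTuple_one, filter_singleton, hm]

lemma compSum_succ_succ (f : ℕ → ℝ) (p m : ℕ) :
    compSum f (p + 1) (m + 1) = ∑ ij ∈ antidiagonal m, f (ij.1 + 1) * compSum f p ij.2 := by
  simp_rw [compSum, mul_sum]
  rw [sum_sigma']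
  refine sum_nbij' (fun x => ⟨(x 0 - 1, m + 1 - x 0), Fin.tail x⟩)
    (fun s => Fin.cons (s.1.1 + 1) s.2) ?_ ?_ ?_ ?_ ?_
  · intro x hx
    simp only [mem_filter, Finset.Nat.mem_antidiagonalTuple, Fin.sum_univ_succ] at hx
    simp only [mem_sigma, mem_filter, HasAntidiagonal.mem_antidiagonal,
      Finset.Nat.mem_antidiagonalTuple]
    have := hx.2 0
    exact ⟨by omega, by simp only [Fin.tail]; omega, fun i => hx.2 i.succ⟩
  · rintro ⟨⟨i, j⟩, y⟩ hy
    simp only [mem_sigma, mem_filter, HasAntidiagonal.mem_antidiagonal,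
      Finset.Nat.mem_antidiagonalTuple] at hy
    simp only [mem_filter, Finset.Nat.mem_antidiagonalTuple, Fin.sum_cons,
      hy.2.1, Fin.forall_fin_succ, Fin.cons_zero, Fin.cons_succ]
    exact ⟨by omega, by omega, hy.2.2⟩
  · intro x hx
    simp only [mem_filter] at hx
    have := hx.2 0
    simp only [Nat.sub_add_cancel this, Fin.cons_self_tail]
  · rintro ⟨⟨i, j⟩, y⟩ hy
    simp only [mem_sigma, mem_filter, HasAntidiagonal.mem_antidiagonal,
      Finset.Nat.mem_antidiagonalTuple] at hy
    simp only [Fin.cons_zero, Fin.tail_cons, Nat.add_sub_cancel, Sigma.mk.injEq, Prod.mk.injEq,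
      heq_eq_eq, and_true, true_and]
    omega
  · intro x hx
    simp only [mem_filter] at hx
    simp [Fin.prod_univ_succ, Nat.sub_add_cancel (hx.2 0), Fin.tail]

/-- Includes the empty composition `p = 0`, so that `compositionSum c f 0 = 1`. -/
noncomputable def compositionSum (c : ℝ) (f : ℕ → ℝ) (m : ℕ) : ℝ :=
  ∑ p ∈ range (m + 1), c ^ p * compSum f p m

section compositionSum

variable (c : ℝ) (f : ℕ → ℝ)

lemma sum_range_eq_compositionSum {m N : ℕ} (h : m < N) :
    ∑ p ∈ range N, c ^ p * compSum f p m = compositionSum c f m := by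
  refine (sum_subset (range_subset_range.mpr h) fun p _ hp => ?_).symm
  rw [compSum_eq_zero_of_lt f (by simpa using hp), mul_zero]

lemma sum_Icc_eq_compositionSum (m : ℕ) :
    ∑ p ∈ Icc 1 (m + 1), c ^ p * compSum f p (m + 1) = compositionSum c f (m + 1) := by
  rw [compositionSum, range_eq_Ico, sum_eq_sum_Ico_succ_bot (by omega),
    Ico_add_one_right_eq_Icc, compSum_zero_succ, mul_zero, zero_add]

lemma compositionSum_zero : compositionSum c f 0 = 1 := by
  simp [compositionSum, compSum_zero_zero]

lemma compositionSum_succ (m : ℕ) :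
    compositionSum c f (m + 1) =
      c * ∑ ij ∈ antidiagonal m, f (ij.1 + 1) * compositionSum c f ij.2 := by
  rw [compositionSum, sum_range_succ', compSum_zero_succ, mul_zero, add_zero]
  simp_rw [compSum_succ_succ, mul_sum, sum_comm (s := range (m + 1))]
  refine sum_congr rfl fun ij hij => ?_
  rw [← sum_range_eq_compositionSum c f (N := m + 1)
    (by have := HasAntidiagonal.mem_antidiagonal.mp hij; omega), mul_sum, mul_sum]
  exact sum_congr rfl fun p _ => by ring

end compositionSum

section IsMuSeq

variable {a b c : ℝ} {μ : ℕ → ℝ}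

lemma IsMuSeq.one_add_mul_mul_eq (hμ : IsMuSeq a b c μ) (m : ℕ) :
    (1 + a * c) * μ (m + 1) = a * compositionSum c μ (m + 1) + b * compositionSum c μ m := by
  rcases m with _ | m
  · simp only [zero_add, hμ.1, compositionSum_succ, HasAntidiagonal.antidiagonal_zero,
      sum_singleton, compositionSum_zero, mul_one]
    ring
  have hsplit : compositionSum c μ (m + 2) =
      c * μ (m + 2) + ∑ p ∈ Icc 2 (m + 2), c ^ p * compSum μ p (m + 2) := by
    rw [← sum_Icc_eq_compositionSum, ← add_sum_Ioc_eq_sum_Icc (by omega), pow_one,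
      compSum_one μ (by omega), ← Icc_add_one_left_eq_Ioc]
    rfl
  have hrec := hμ.2 (m + 2) (by omega)
  rw [show m + 2 - 1 = m + 1 from rfl, sum_Icc_eq_compositionSum] at hrec
  linear_combination hrec - a * hsplit

lemma IsMuSeq.catalan_recursion (hμ : IsMuSeq a b c μ) (m : ℕ) :
    μ (m + 2) = (c + a * c ^ 2) * ∑ ij ∈ antidiagonal m, μ (ij.1 + 1) * μ (ij.2 + 1) := by
  have h2 := compositionSum_succ c μ (m + 1)
  rw [Nat.sum_antidiagonal_succ', compositionSum_zero] at h2
  have h1 := compositionSum_succ c μ m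
  have h := hμ.one_add_mul_mul_eq
  have hconv : (1 + a * c) * ∑ ij ∈ antidiagonal m, μ (ij.1 + 1) * μ (ij.2 + 1) =
      a * ∑ ij ∈ antidiagonal m, μ (ij.1 + 1) * compositionSum c μ (ij.2 + 1) +
        b * ∑ ij ∈ antidiagonal m, μ (ij.1 + 1) * compositionSum c μ ij.2 := by
    simp_rw [mul_sum, ← sum_add_distrib]
    exact sum_congr rfl fun ij _ => by linear_combination μ (ij.1 + 1) * h ij.2
  linear_combination h (m + 1) + a * h2 + b * h1 - c * hconv

end IsMuSeq

lemma eq_catalan_mul_pow_of_recursion {b d : ℝ} {ν : ℕ → ℝ} (h₁ : ν 1 = b)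
    (hrec : ∀ m, ν (m + 2) = d * ∑ ij ∈ antidiagonal m, ν (ij.1 + 1) * ν (ij.2 + 1)) (n : ℕ) :
    ν (n + 1) = catalan n * b ^ (n + 1) * d ^ n := by
  induction n using Nat.strong_induction_on with
  | _ n ih =>
    rcases n with _ | m
    · simp [h₁]
    rw [hrec, catalan_succ', Nat.cast_sum, sum_mul, sum_mul, mul_sum]
    refine sum_congr rfl fun ij hij => ?_
    have hij := HasAntidiagonal.mem_antidiagonal.mp hij
    rw [ih ij.1 (by omega), ih ij.2 (by omega), ← hij]
    push_cast
    ring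

lemma compositionSum_le_catalan_mul_pow {b c d : ℝ} {f : ℕ → ℝ} (hb : 0 ≤ b) (hc : 0 ≤ c)
    (hcd : c ≤ d) (hf : ∀ n, f (n + 1) = catalan n * b ^ (n + 1) * d ^ n) (m : ℕ) :
    compositionSum c f m ≤ catalan m * (b * d) ^ m := by
  have hd : 0 ≤ d := hc.trans hcd
  induction m using Nat.strong_induction_on with
  | _ m ih =>
    rcases m with _ | m
    · simp [compositionSum_zero]
    calc compositionSum c f (m + 1)
        = c * ∑ ij ∈ antidiagonal m, f (ij.1 + 1) * compositionSum c f ij.2 :=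
          compositionSum_succ c f m
      _ ≤ c * ∑ ij ∈ antidiagonal m, f (ij.1 + 1) * (catalan ij.2 * (b * d) ^ ij.2) := by
          gcongr with ij hij
          · rw [hf]; positivity
          · exact ih ij.2 (by have := HasAntidiagonal.mem_antidiagonal.mp hij; omega)
      _ = c * (catalan (m + 1) * b ^ (m + 1) * d ^ m) := by
          rw [catalan_succ', Nat.cast_sum, sum_mul, sum_mul]
          refine congrArg (c * ·) (sum_congr rfl fun ij hij => ?_)
          rw [hf, ← HasAntidiagonal.mem_antidiagonal.mp hij]
          push_cast
          ring
      _ ≤ d * (catalan (m + 1) * b ^ (m + 1) * d ^ m) := by gcongr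
      _ = catalan (m + 1) * (b * d) ^ (m + 1) := by ring

lemma catalan_le_four_pow (n : ℕ) : catalan n ≤ 4 ^ n :=
  calc catalan n ≤ (n + 1) * catalan n := Nat.le_mul_of_pos_left _ n.succ_pos
    _ = n.centralBinom := succ_mul_catalan_eq_centralBinom n
    _ ≤ 4 ^ n := Nat.centralBinom_le_four_pow n

/-- With `χ_m = a Σ_{p=1}^m c^p Σ_{k_1+⋯+k_p=m, k_i≥1} μ_{k_1}⋯μ_{k_p}`, one has
`χ_m ≤ a (4b(c + ac²))^m` for every `m ≥ 1`. -/
theorem chi_le_pow (a b c : ℝ) (ha : 0 < a) (hb : 0 < b) (hc : 0 < c)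
    (μ : ℕ → ℝ) (hμ : IsMuSeq a b c μ) :
    ∀ m, 1 ≤ m →
      a * ∑ p ∈ Finset.Icc 1 m, c ^ p * compSum μ p m
        ≤ a * (4 * b * (c + a * c ^ 2)) ^ m := by
  intro m hm
  obtain ⟨n, rfl⟩ := Nat.exists_eq_add_of_le' hm
  set d := c + a * c ^ 2
  have hμ_closed := eq_catalan_mul_pow_of_recursion hμ.1 hμ.catalan_recursion
  have hcd : c ≤ d := le_add_of_nonneg_right (by positivity)
  rw [sum_Icc_eq_compositionSum]
  gcongr
  calc compositionSum c μ (n + 1)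
      ≤ catalan (n + 1) * (b * d) ^ (n + 1) :=
        compositionSum_le_catalan_mul_pow hb.le hc.le hcd hμ_closed _
    _ ≤ 4 ^ (n + 1) * (b * d) ^ (n + 1) := by gcongr; exact_mod_cast catalan_le_four_pow _
    _ = (4 * b * d) ^ (n + 1) := by rw [← mul_pow, mul_assoc]
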